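/- arXiv:1709.05363 — 2 statements merged into one kernel-verified Lean document; each statement's English description precedes it below -/
import Mathlib

section
/- Let Q be a partition and B a set, and let Q' be the partition obtained by splitting each cell of Q along B; then the abstraction of B in Q' concretizes exactly to B, i.e. γ(α_{Q'}(B)) = B. -/
def IsAbstractionPartition {Lt : Type*} (Q : Set (Set Lt)) : Prop :=
  (∀ C ∈ Q, C.Nonempty) ∧
  (∀ C ∈ Q, ∀ C' ∈ Q, C ≠ C' → Disjoint C C') ∧
  ⋃₀ Q = Set.univ

def abstr {Lt : Type*} (Q : Set (Set Lt)) (B : Set Lt) : Set (Set Lt) :=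
  {C | C ∈ Q ∧ (C ∩ B).Nonempty}

def concr {Lt : Type*} (A : Set (Set Lt)) : Set Lt := ⋃₀ A

def splitBy {Lt : Type*} (Q : Set (Set Lt)) (B : Set Lt) : Set (Set Lt) :=
  {C' | ∃ C ∈ Q, C' = C ∩ B ∧ (C ∩ B).Nonempty} ∪
  {C' | ∃ C ∈ Q, C' = C \ B ∧ (C \ B).Nonempty}

/-- In the partition `Q'` obtained by splitting each cell of `Q`
along `B`, the abstraction of `B` concretizes exactly to `B`: `γ(α_{Q'}(B)) = B`. -/
theorem concr_abstr_splitBy {Lt : Type*} [Fintype Lt]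
    (Q : Set (Set Lt)) (hQ : IsAbstractionPartition Q) (B : Set Lt) :
    concr (abstr (splitBy Q B) B) = B := by
  ext x
  constructor
  · rintro ⟨D, ⟨hD, hne⟩, hxD⟩
    rcases hD with ⟨C, -, rfl, -⟩ | ⟨C, -, rfl, -⟩
    · exact hxD.2
    · obtain ⟨y, hy⟩ := hne
      exact absurd hy.2 hy.1.2
  · intro hxB
    obtain ⟨C, hC, hxC⟩ : ∃ C ∈ Q, x ∈ C := by
      have := hQ.2.2
      have : x ∈ ⋃₀ Q := this ▸ Set.mem_univ x
      exact this
    exact ⟨C ∩ B, ⟨Or.inl ⟨C, hC, rfl, ⟨x, hxC, hxB⟩⟩,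
      ⟨x, ⟨hxC, hxB⟩, hxB⟩⟩, hxC, hxB⟩
end

section
/- In a finite two-player turn-based game with a safety objective (the agent wins a play iff every visited state satisfies a predicate p), exactly one of the players has a winning strategy (determinacy), and if the target has a winning strategy then it has one representable as a finite tree: a tree rooted at the initial state, branching over all agent choices for the target's chosen move, whose leaves are exactly the nodes labelled with states violating p. -/
/-- A finite two-player turn-based game: in each state the target picks a choice
from a nonempty set, then the agent picks a successor state consistent with it. -/
structure Game (S C : Type*) where
  init : S
  tgt : S → Set C
  agt : S → C → Set S

namespace Game

variable {S C : Type*}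

def cur (G : Game S C) (h : List S) : S := h.headD G.init

def hist (G : Game S C) (σ : List S → C → S) (τ : List S → C) : ℕ → List S
  | 0 => [G.init]
  | n + 1 => σ (G.hist σ τ n) (τ (G.hist σ τ n)) :: G.hist σ τ n

def AgtValid (G : Game S C) (σ : List S → C → S) : Prop :=
  ∀ h c, c ∈ G.tgt (G.cur h) → σ h c ∈ G.agt (G.cur h) c

def TgtValid (G : Game S C) (τ : List S → C) : Prop :=
  ∀ h, τ h ∈ G.tgt (G.cur h)

/-- The agent wins the safety game `□ p` with strategy `σ`. -/
def AgtWinsSafety (G : Game S C) (p : S → Prop) (σ : List S → C → S) : Prop :=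
  G.AgtValid σ ∧ ∀ τ, G.TgtValid τ → ∀ n, ∀ s ∈ G.hist σ τ n, p s

/-- The target wins the safety game with strategy `τ`: against every valid agent
strategy some visited state violates `p`. -/
def TgtWinsSafety (G : Game S C) (p : S → Prop) (τ : List S → C) : Prop :=
  G.TgtValid τ ∧ ∀ σ, G.AgtValid σ → ∃ n, ∃ s ∈ G.hist σ τ n, ¬ p s

end Game

/-- A (finite) counterexample tree: a leaf carries a state; an internal node carries
a state, the target's chosen move, and a child for every agent choice. -/
inductive CexTree (S C : Type*) where
  | leaf : S → CexTree S C
  | node : S → C → (S → CexTree S C) → CexTree S C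

namespace CexTree

variable {S C : Type*}

def root : CexTree S C → S
  | leaf s => s
  | node s _ _ => s

/-- The tree is a valid counterexample tree for the safety game `(G, □ p)`:
it is rooted consistently, branches according to all possible agent responses to
the target's chosen move, and its leaves are exactly the nodes whose states
violate `p`. -/
def Valid (G : Game S C) (p : S → Prop) : CexTree S C → Prop
  | leaf s => ¬ p s
  | node s c f => p s ∧ c ∈ G.tgt s ∧
      ∀ s' ∈ G.agt s c, (f s').root = s' ∧ Valid G p (f s')

end CexTree

namespace SafetyAux

open Classical

noncomputable section

variable {S C : Type*}

/-- States from which the target can force a violation of `p` within `n` steps. -/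
def BadN (G : Game S C) (p : S → Prop) : ℕ → S → Prop
  | 0, _ => False
  | n + 1, s => ¬ p s ∨ (p s ∧ ∃ c ∈ G.tgt s, ∀ s' ∈ G.agt s c, BadN G p n s')

theorem badN_mono (G : Game S C) (p : S → Prop) :
    ∀ {n m : ℕ}, n ≤ m → ∀ {s}, BadN G p n s → BadN G p m s := by
  intro n
  induction n with
  | zero => intro m _ s h; exact h.elim
  | succ k ih =>
    intro m hm s h
    obtain ⟨m', rfl⟩ : ∃ m', m = m' + 1 := ⟨m - 1, by omega⟩
    rcases h with h | ⟨hp, c, hc, hall⟩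
    · exact Or.inl h
    · exact Or.inr ⟨hp, c, hc, fun s' hs' => ih (by omega) (hall s' hs')⟩

def Bad (G : Game S C) (p : S → Prop) (s : S) : Prop := ∃ n, BadN G p n s

noncomputable def rank (G : Game S C) (p : S → Prop) (s : S) : ℕ :=
  if h : Bad G p s then Nat.find h else 0

theorem not_p_bad {G : Game S C} {p : S → Prop} {s : S} (h : ¬ p s) : Bad G p s :=
  ⟨1, Or.inl h⟩

theorem bad_step {G : Game S C} {p : S → Prop}
    (hagt : ∀ s c, c ∈ G.tgt s → (G.agt s c).Nonempty)
    {s : S} (hb : Bad G p s) (hp : p s) :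
    ∃ c ∈ G.tgt s, ∀ s' ∈ G.agt s c,
      Bad G p s' ∧ rank G p s' < rank G p s := by
  have hr : rank G p s = Nat.find hb := dif_pos hb
  have hfind : BadN G p (Nat.find hb) s := Nat.find_spec hb
  obtain ⟨m, hm⟩ : ∃ m, Nat.find hb = m + 1 := by
    rcases Nat.eq_zero_or_pos (Nat.find hb) with h0 | h0
    · rw [h0] at hfind; exact hfind.elim
    · exact ⟨Nat.find hb - 1, by omega⟩
  rw [hm] at hfind
  rcases hfind with h | ⟨_, c, hc, hall⟩
  · exact absurd hp h
  · refine ⟨c, hc, fun s' hs' => ?_⟩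
    have hb' : Bad G p s' := ⟨m, hall s' hs'⟩
    refine ⟨hb', ?_⟩
    have : rank G p s' = Nat.find hb' := dif_pos hb'
    rw [this, hr, hm]
    exact Nat.lt_succ_of_le (Nat.find_le (hall s' hs'))

theorem not_bad_p {G : Game S C} {p : S → Prop} {s : S} (h : ¬ Bad G p s) : p s :=
  not_not.1 fun hp => h (not_p_bad hp)

theorem not_bad_step {S C : Type*} [Finite S] {G : Game S C} {p : S → Prop}
    {s : S} (h : ¬ Bad G p s) {c : C} (hc : c ∈ G.tgt s) :
    ∃ s' ∈ G.agt s c, ¬ Bad G p s' := by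
  by_contra hcon
  push_neg at hcon
  apply h
  -- all successors are bad; get a uniform bound
  have hfin : (G.agt s c).Finite := Set.toFinite _
  set f : S → ℕ := fun s' => if hb : Bad G p s' then Nat.find hb else 0 with hf
  obtain ⟨N, hN⟩ := (hfin.image f).bddAbove
  refine ⟨N + 1, Or.inr ⟨not_bad_p h, c, hc, fun s' hs' => ?_⟩⟩
  have hb' : Bad G p s' := hcon s' hs'
  have h1 : BadN G p (f s') s' := by rw [hf]; simp only [dif_pos hb']; exact Nat.find_spec hb'
  exact badN_mono G p (hN ⟨s', hs', rfl⟩) h1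

/-- Every bad state admits a valid counterexample tree. -/
theorem bad_tree {G : Game S C} {p : S → Prop} :
    ∀ n, ∀ s, BadN G p n s → ∃ t : CexTree S C, t.root = s ∧ t.Valid G p := by
  intro n
  induction n with
  | zero => intro s h; exact h.elim
  | succ k ih =>
    intro s h
    rcases h with h | ⟨hp, c, hc, hall⟩
    · exact ⟨.leaf s, rfl, h⟩
    · set f : S → CexTree S C := fun s' =>
        if hb : BadN G p k s' then (ih s' hb).choose else .leaf s' with hf
      refine ⟨.node s c f, rfl, hp, hc, fun s' hs' => ?_⟩
      have hb : BadN G p k s' := hall s' hs'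
      have : f s' = (ih s' hb).choose := by rw [hf]; simp only [dif_pos hb]
      rw [this]
      exact (ih s' hb).choose_spec

end

end SafetyAux


open SafetyAux Classical

/-- In a finite turn-based safety game, exactly one of the players has
a winning strategy (determinacy); and if the target has a winning strategy, then it
has one representable as a finite counterexample tree rooted at the initial state. -/
theorem safety_determinacy_and_tree {S C : Type*} [Finite S] [Finite C]
    (G : Game S C) (p : S → Prop)
    (htgt : ∀ s, (G.tgt s).Nonempty)
    (hagt : ∀ s c, c ∈ G.tgt s → (G.agt s c).Nonempty) :
    Xor' (∃ σ, G.AgtWinsSafety p σ) (∃ τ, G.TgtWinsSafety p τ) ∧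
    ((∃ τ, G.TgtWinsSafety p τ) →
      ∃ t : CexTree S C, t.root = G.init ∧ t.Valid G p) := by
  classical
  -- head of a history is a member
  have cur_mem : ∀ (σ : List S → C → S) (τ : List S → C) (n : ℕ),
      G.cur (G.hist σ τ n) ∈ G.hist σ τ n := by
    intro σ τ n
    cases n with
    | zero => simp [Game.hist, Game.cur]
    | succ k => simp [Game.hist, Game.cur]
  -- not both can win
  have hnotboth : ¬ ((∃ σ, G.AgtWinsSafety p σ) ∧ (∃ τ, G.TgtWinsSafety p τ)) := by
    rintro ⟨⟨σ, hσv, hσw⟩, ⟨τ, hτv, hτw⟩⟩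
    obtain ⟨n, s, hs, hps⟩ := hτw σ hσv
    exact hps (hσw τ hτv n s hs)
  by_cases hbad : Bad G p G.init
  · -- target wins
    have htau : ∃ τ, G.TgtWinsSafety p τ := by
      set τ : List S → C := fun h =>
        if hb : Bad G p (G.cur h) ∧ p (G.cur h) then
          (bad_step hagt hb.1 hb.2).choose
        else (htgt (G.cur h)).choose with hτ
      have hτv : G.TgtValid τ := by
        intro h
        rw [hτ]
        by_cases hb : Bad G p (G.cur h) ∧ p (G.cur h)
        · simp only [dif_pos hb]
          exact (bad_step hagt hb.1 hb.2).choose_spec.1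
        · simp only [dif_neg hb]
          exact (htgt (G.cur h)).choose_spec
      refine ⟨τ, hτv, fun σ hσv => ?_⟩
      by_contra hcon
      push_neg at hcon
      -- show the rank decreases along the play
      have key : ∀ k, Bad G p (G.cur (G.hist σ τ k)) ∧
          rank G p (G.cur (G.hist σ τ k)) + k ≤ rank G p G.init := by
        intro k
        induction k with
        | zero => simpa [Game.hist, Game.cur] using hbad
        | succ m ih =>
          obtain ⟨ihb, ihr⟩ := ih
          set h := G.hist σ τ m with hh
          have hp : p (G.cur h) := hcon m (G.cur h) (cur_mem σ τ m)
          have hb : Bad G p (G.cur h) ∧ p (G.cur h) := ⟨ihb, hp⟩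
          have hτh : τ h = (bad_step hagt hb.1 hb.2).choose := by
            rw [hτ]; simp only [dif_pos hb]
          obtain ⟨hcτ, hstep⟩ := (bad_step hagt hb.1 hb.2).choose_spec
          have hmem : σ h (τ h) ∈ G.agt (G.cur h) (τ h) := by
            apply hσv
            rw [hτh]; exact hcτ
          have hcur : G.cur (G.hist σ τ (m + 1)) = σ h (τ h) := by
            simp [Game.hist, Game.cur, ← hh]
          rw [hτh] at hmem
          obtain ⟨hb', hr'⟩ := hstep _ hmem
          constructor
          · rw [hcur, hτh]; exact hb'
          · rw [hcur, hτh]; omega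
      have := (key (rank G p G.init + 1)).2
      omega
    exact ⟨Or.inr ⟨htau, fun ⟨σ, hσ⟩ => hnotboth ⟨⟨σ, hσ⟩, htau⟩⟩,
      fun _ => by
        obtain ⟨n, hn⟩ := hbad
        exact bad_tree n G.init hn⟩
  · -- agent wins
    have hagent : ∃ σ, G.AgtWinsSafety p σ := by
      set σ : List S → C → S := fun h c =>
        if hb : ¬ Bad G p (G.cur h) ∧ c ∈ G.tgt (G.cur h) then
          (not_bad_step hb.1 hb.2).choose
        else if hc : c ∈ G.tgt (G.cur h) then (hagt _ _ hc).choose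
        else G.init with hσ
      have hσv : G.AgtValid σ := by
        intro h c hc
        rw [hσ]
        by_cases hb : ¬ Bad G p (G.cur h) ∧ c ∈ G.tgt (G.cur h)
        · simp only [dif_pos hb]
          exact (not_bad_step hb.1 hb.2).choose_spec.1
        · simp only [dif_neg hb, dif_pos hc]
          exact (hagt _ _ hc).choose_spec
      refine ⟨σ, hσv, fun τ hτv n => ?_⟩
      have key : ∀ s ∈ G.hist σ τ n, ¬ Bad G p s := by
        induction n with
        | zero =>
          intro s hs
          simp only [Game.hist, List.mem_singleton] at hs
          rwa [hs]
        | succ m ih =>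
          intro s hs
          simp only [Game.hist, List.mem_cons] at hs
          rcases hs with hs | hs
          · set h := G.hist σ τ m with hh
            have hnb : ¬ Bad G p (G.cur h) := ih _ (cur_mem σ τ m)
            have hc : τ h ∈ G.tgt (G.cur h) := hτv h
            have hb : ¬ Bad G p (G.cur h) ∧ τ h ∈ G.tgt (G.cur h) := ⟨hnb, hc⟩
            have : σ h (τ h) = (not_bad_step hb.1 hb.2).choose := by
              rw [hσ]; simp only [dif_pos hb]
            rw [hs, this]
            exact (not_bad_step hb.1 hb.2).choose_spec.2
          · exact ih s hs
      exact fun s hs => not_bad_p (key s hs)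
    refine ⟨Or.inl ⟨hagent, fun htau => hnotboth ⟨hagent, htau⟩⟩, fun htau => ?_⟩
    exact absurd htau (fun ⟨τ, hτ⟩ => hnotboth ⟨hagent, ⟨τ, hτ⟩⟩)
end
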